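/- Let A, B ⊆ [m] with A ⊄ B and B ⊄ A, Δ = Δ_A ∪ Δ_B, D = Δ + wΔ, N = 2^{|A|} + 2^{|B|} − 2^{|A∩B|}, and D^c = (F_4^m \ {0}) \ D. Then C_{D^c} has length 4^m − N², exactly 4^m distinct codewords (dimension m over F_4), for every nonzero x ∈ F_4^m one has wt(c_{D^c}(x)) = 3·2^{2m−2} − wt(c_D(x)), and the minimum distance of C_{D^c} equals 3·2^{2m−2} − (2^{|A|}+2^{|B|})(3·2^{|A|−2} + 3·2^{|B|−2} − 2^{|A∩B|}). -/

import Mathlib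

/-!
Write `x = u + w v` and `d = d₁ + w d₂` with `u, v, d₁, d₂` binary. Since `w² = w + 1`, `x · d = 0`
amounts to the two conditions `u·d₁ + v·d₂ = 0` and `v·d₁ + (u + v)·d₂ = 0` over `𝔽₂`, and counting
their solutions with the character `s ↦ (-1)^s` gives
`4 wt_D(x) = 3|Δ|² - (W(u)W(v) + W(v)W(u+v) + W(u+v)W(u))`, where
`W(p) = charSum Δ p = ∑_{d ∈ Δ} (-1)^{p·d}`.
For `Δ = Δ_A ∪ Δ_B` every `W(p)` lies in `[-2^{|A∩B|}, |Δ|]`, and minimising `xy + yz + zx` over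
that box bounds `wt_D`; the bound is attained at `u = e_i + e_j`, `v = 0` with `i ∈ A \ B` and
`j ∈ B \ A`. Finally `0 ∈ D`, so `wt_{D^c}(x) = wt_{𝔽₄^m}(x) - wt_D(x) = 3·4^{m-1} - wt_D(x)` for
`x ≠ 0`.
-/

open Finset

/-- The support of a binary vector, as a finset of coordinates. -/
def supp {m : ℕ} (v : Fin m → ZMod 2) : Finset (Fin m) :=
  Finset.univ.filter (fun i => v i ≠ 0)

/-- The simplicial complex generated by `A`: all binary vectors with support contained in `A`. -/
def delta {m : ℕ} (A : Finset (Fin m)) : Finset (Fin m → ZMod 2) :=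
  Finset.univ.filter (fun v => supp v ⊆ A)

variable {F : Type} [Field F] [Fintype F] [DecidableEq F]

/-- The embedding of `F_2 = {0,1}` into a field `F`. -/
def e2 (a : ZMod 2) : F := (a.val : F)

/-- The inner product `x·d = Σ x_i d_i` of two vectors over `F`. -/
def dotF {m : ℕ} (x d : Fin m → F) : F := ∑ i, x i * d i

/-- The quaternary vector `d_1 + w·d_2` attached to a pair of binary vectors. -/
def dvec {m : ℕ} (w : F) (p : (Fin m → ZMod 2) × (Fin m → ZMod 2)) : Fin m → F :=
  fun i => e2 (p.1 i) + w * e2 (p.2 i)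

/-- The Hamming weight of the codeword `c_D(x) = (x·d)_{d∈D}`. -/
def wtF {m : ℕ} (D : Finset (Fin m → F)) (x : Fin m → F) : ℕ :=
  (D.filter (fun d => dotF x d ≠ 0)).card

/-- The codeword `c_D(x) = (x·d)_{d∈D}` of the code with defining set `D`. -/
def codeword {m : ℕ} (D : Finset (Fin m → F)) (x : Fin m → F) : {d // d ∈ D} → F :=
  fun d => dotF x d.1

open Matrix

lemma ZMod.two_cases (s : ZMod 2) : s = 0 ∨ s = 1 := by revert s; decide

/-- The form `xy + yz + zx` is affine in each variable, so its minimum on the box `[-C, N]³` is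
attained at a vertex. -/
lemma sq_sub_two_mul_mul_le_mul_add_mul_add_mul {R : Type*} [CommRing R] [LinearOrder R]
    [IsStrictOrderedRing R] {C N x y z : R} (hC : 0 ≤ C) (hCN : C ≤ N)
    (hx : x ∈ Set.Icc (-C) N) (hy : y ∈ Set.Icc (-C) N) (hz : z ∈ Set.Icc (-C) N) :
    C ^ 2 - 2 * C * N ≤ x * y + y * z + z * x := by
  obtain ⟨hx₁, hx₂⟩ := hx
  obtain ⟨hy₁, hy₂⟩ := hy
  obtain ⟨hz₁, hz₂⟩ := hz
  rcases le_total 0 (y + z) with h | h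
  · rcases le_total z C with h' | h'
    · nlinarith [mul_nonneg (by linarith : (0 : R) ≤ x + C) h,
        mul_nonneg (by linarith : (0 : R) ≤ N - y) (by linarith : (0 : R) ≤ C - z),
        mul_nonneg (by linarith : (0 : R) ≤ z + C) (by linarith : (0 : R) ≤ N - C)]
    · nlinarith [mul_nonneg (by linarith : (0 : R) ≤ x + C) h,
        mul_nonneg (by linarith : (0 : R) ≤ y + C) (by linarith : (0 : R) ≤ z - C),
        mul_nonneg (by linarith : (0 : R) ≤ N - z) hC]
  · nlinarith [mul_nonneg (by linarith : (0 : R) ≤ N - x) (by linarith : (0 : R) ≤ -(y + z)),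
      mul_nonneg (by linarith : (0 : R) ≤ y + C) (by linarith : (0 : R) ≤ N + z),
      mul_nonneg (by linarith : (0 : R) ≤ z + C) (by linarith : (0 : R) ≤ N - C)]

lemma three_mul_two_pow_sub_pos {m a b : ℕ} (c : ℕ) (ha : a < m) (hb : b < m) :
    (0 : ℚ) < 3 * 2 ^ (2 * m - 2) - (2 ^ a + 2 ^ b) * (3 * 2 ^ a / 4 + 3 * 2 ^ b / 4 - 2 ^ c) := by
  -- four times the right side is `3 (4^m - (2^a + 2^b)²) + 4·2^c (2^a + 2^b)`
  have hpow {k : ℕ} (hk : k < m) : (2 : ℚ) ^ k * 2 ≤ 2 ^ m := by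
    rw [← pow_succ]
    exact pow_le_pow_right₀ one_le_two hk
  have hm : (2 : ℚ) ^ (2 * m - 2) * 4 = 2 ^ m * 2 ^ m := by
    rw [← pow_add, show (4 : ℚ) = 2 ^ 2 by norm_num, ← pow_add]
    congr 1
    omega
  have hS : (0 : ℚ) ≤ 2 ^ m - (2 ^ a + 2 ^ b) := by linarith [hpow ha, hpow hb]
  nlinarith [mul_nonneg hS (by positivity : (0 : ℚ) ≤ 2 ^ m + (2 ^ a + 2 ^ b)),
    mul_pos (by positivity : (0 : ℚ) < 2 ^ c) (by positivity : (0 : ℚ) < 2 ^ a + 2 ^ b)]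

section Delta

variable {m : ℕ}

lemma mem_delta {A : Finset (Fin m)} {v : Fin m → ZMod 2} :
    v ∈ delta A ↔ ∀ i ∉ A, v i = 0 := by
  simp only [delta, supp, mem_filter, mem_univ, true_and, subset_iff]
  exact forall_congr' fun i => not_imp_comm

lemma delta_eq_piFinset (A : Finset (Fin m)) :
    delta A = Fintype.piFinset fun i => if i ∈ A then univ else {0} := by
  ext v
  simp only [mem_delta, Fintype.mem_piFinset]
  refine forall_congr' fun i => ?_
  split_ifs with hi <;> simp [hi]

lemma card_delta (A : Finset (Fin m)) : #(delta A) = 2 ^ #A := by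
  rw [delta_eq_piFinset, Fintype.card_piFinset]
  simp [apply_ite Finset.card, prod_ite_mem]

lemma zero_mem_delta (A : Finset (Fin m)) : 0 ∈ delta A := mem_delta.mpr fun _ _ => rfl

lemma delta_inter_delta (A B : Finset (Fin m)) : delta A ∩ delta B = delta (A ∩ B) := by
  ext v
  simp only [mem_inter, mem_delta, ← forall_and]
  exact forall_congr' fun i => by tauto

lemma card_delta_union_delta_add (A B : Finset (Fin m)) :
    #(delta A ∪ delta B) + 2 ^ #(A ∩ B) = 2 ^ #A + 2 ^ #B := by
  rw [← card_delta, ← card_delta, ← card_delta, ← delta_inter_delta, card_union_add_card_inter]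

lemma two_pow_card_inter_le_card_delta_union_delta (A B : Finset (Fin m)) :
    2 ^ #(A ∩ B) ≤ #(delta A ∪ delta B) := by
  rw [← card_delta, ← delta_inter_delta]
  exact card_le_card (inter_subset_left.trans subset_union_left)

lemma card_lt_of_not_subset {A B : Finset (Fin m)} (h : ¬ B ⊆ A) : #A < m := by
  obtain ⟨j, -, hjA⟩ := not_subset.mp h
  exact (card_lt_univ_of_notMem hjA).trans_eq (Fintype.card_fin m)

end Delta

def chi (s : ZMod 2) : ℤ := if s = 0 then 1 else -1

lemma chi_add (s t : ZMod 2) : chi (s + t) = chi s * chi t := by revert s t; decide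

lemma chi_le_one (s : ZMod 2) : chi s ≤ 1 := by revert s; decide

section CharSum

variable {m : ℕ}

def charSum (Δ : Finset (Fin m → ZMod 2)) (p : Fin m → ZMod 2) : ℤ := ∑ d ∈ Δ, chi (p ⬝ᵥ d)

lemma charSum_zero (Δ : Finset (Fin m → ZMod 2)) : charSum Δ 0 = #Δ := by
  simp [charSum, chi]

lemma charSum_le_card (Δ : Finset (Fin m → ZMod 2)) (p : Fin m → ZMod 2) : charSum Δ p ≤ #Δ := by
  simpa [charSum] using sum_le_card_nsmul Δ _ 1 fun d _ => chi_le_one (p ⬝ᵥ d)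

/-- When `p j = 1` for some `j ∈ A`, translation by `Pi.single j 1` preserves `Δ_A` and flips the
sign of every summand. -/
lemma charSum_delta (A : Finset (Fin m)) (p : Fin m → ZMod 2) :
    charSum (delta A) p = if ∀ i ∈ A, p i = 0 then 2 ^ #A else 0 := by
  split_ifs with hp
  · have h0 (d : Fin m → ZMod 2) (hd : d ∈ delta A) : p ⬝ᵥ d = 0 :=
      sum_eq_zero fun i _ => by
        by_cases hi : i ∈ A
        · rw [hp i hi, zero_mul]
        · rw [mem_delta.mp hd i hi, mul_zero]
    rw [charSum, sum_congr rfl fun d hd => by rw [h0 d hd], sum_const, card_delta]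
    simp [chi]
  · obtain ⟨j, hjA, hpj⟩ := not_forall₂.mp hp
    have hpj : p j = 1 := (p j).two_cases.resolve_left hpj
    set e : Fin m → ZMod 2 := Pi.single j 1 with he
    have hmem (d : Fin m → ZMod 2) (hd : d ∈ delta A) : d + e ∈ delta A := by
      refine mem_delta.mpr fun i hi => ?_
      rw [Pi.add_apply, mem_delta.mp hd i hi, he,
        Pi.single_eq_of_ne (ne_of_mem_of_not_mem hjA hi).symm, add_zero]
    have hinv (d : Fin m → ZMod 2) : d + e + e = d := by
      ext i
      rw [Pi.add_apply, Pi.add_apply, add_assoc, CharTwo.add_self_eq_zero, add_zero]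
    have hflip : charSum (delta A) p = -charSum (delta A) p := by
      rw [charSum, ← sum_neg_distrib]
      refine sum_nbij' (· + e) (· + e) hmem hmem (fun d _ => hinv d) (fun d _ => hinv d) ?_
      intro d _
      rw [dotProduct_add, he, dotProduct_single, hpj, mul_one, chi_add, neg_mul_eq_mul_neg]
      simp [chi]
    linarith

lemma charSum_delta_union_delta (A B : Finset (Fin m)) (p : Fin m → ZMod 2) :
    charSum (delta A ∪ delta B) p
      = (if ∀ i ∈ A, p i = 0 then 2 ^ #A else 0) + (if ∀ i ∈ B, p i = 0 then 2 ^ #B else 0)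
        - (if ∀ i ∈ A ∩ B, p i = 0 then 2 ^ #(A ∩ B) else 0) := by
  rw [← charSum_delta, ← charSum_delta, ← charSum_delta, ← delta_inter_delta, eq_sub_iff_add_eq]
  exact sum_union_inter

lemma neg_two_pow_card_inter_le_charSum (A B : Finset (Fin m)) (p : Fin m → ZMod 2) :
    -2 ^ #(A ∩ B) ≤ charSum (delta A ∪ delta B) p := by
  rw [charSum_delta_union_delta]
  have := pow_pos (two_pos (α := ℤ))
  split_ifs <;> linarith [this #A, this #B, this #(A ∩ B)]

lemma charSum_delta_union_delta_eq_neg {A B : Finset (Fin m)} {p : Fin m → ZMod 2}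
    (hA : ¬ ∀ i ∈ A, p i = 0) (hB : ¬ ∀ i ∈ B, p i = 0) (hAB : ∀ i ∈ A ∩ B, p i = 0) :
    charSum (delta A ∪ delta B) p = -2 ^ #(A ∩ B) := by
  rw [charSum_delta_union_delta, if_neg hA, if_neg hB, if_pos hAB, zero_add, zero_sub]

end CharSum

section Complement

variable {K : Type} [Field K] {m : ℕ}

lemma dotF_eq_dotProduct (x d : Fin m → K) : dotF x d = x ⬝ᵥ d := rfl

variable [DecidableEq K]

lemma wtF_zero (D : Finset (Fin m → K)) : wtF D 0 = 0 := by
  simp [wtF, dotF]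

lemma codeword_injective {D : Finset (Fin m → K)} (hD : ∀ x ≠ 0, wtF D x ≠ 0) :
    Function.Injective (codeword D) := by
  intro x y hxy
  by_contra hne
  refine hD (x - y) (sub_ne_zero.mpr hne) (card_eq_zero.mpr ?_)
  refine filter_eq_empty_iff.mpr fun d hd => not_not.mpr ?_
  have hd : x ⬝ᵥ d = y ⬝ᵥ d := congrFun hxy ⟨d, hd⟩
  rw [dotF_eq_dotProduct, sub_dotProduct, hd, sub_self]

variable [Fintype K]

lemma erase_zero_sdiff_eq_compl {D : Finset (Fin m → K)} (h0 : 0 ∈ D) :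
    univ.erase 0 \ D = Dᶜ := by
  rw [erase_sdiff_comm, erase_eq_of_notMem (by simpa using h0), compl_eq_univ_sdiff]

lemma wtF_add_wtF_compl (D : Finset (Fin m → K)) (x : Fin m → K) :
    wtF D x + wtF Dᶜ x = wtF univ x := by
  rw [wtF, wtF, wtF, ← card_union_of_disjoint (disjoint_filter_filter disjoint_compl_right),
    ← filter_union, union_compl]

lemma card_filter_dotProduct_eq_zero {x : Fin m → K} (hx : x ≠ 0) :
    #{d | x ⬝ᵥ d = 0} = Fintype.card K ^ (m - 1) := by
  set f := dotProductBilin K K x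
  have hf : Function.Surjective f := by
    obtain ⟨i, hi⟩ := Function.ne_iff.mp hx
    intro c
    refine ⟨Pi.single i ((x i)⁻¹ * c), ?_⟩
    rw [dotProductBilin_apply_apply, dotProduct_single, ← mul_assoc, mul_inv_cancel₀ hi, one_mul]
  have hrank : Module.finrank K (LinearMap.ker f) = m - 1 := by
    have := LinearMap.finrank_range_add_finrank_ker f
    rw [LinearMap.range_eq_top.mpr hf, finrank_top, Module.finrank_self,
      Module.finrank_fin_fun] at this
    omega
  rw [← hrank, ← Nat.card_eq_fintype_card, ← Module.natCard_eq_pow_finrank,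
    ← Nat.card_eq_finsetCard]
  exact Nat.card_congr (Equiv.subtypeEquivRight fun d => by simp [f])

lemma wtF_univ {x : Fin m → K} (hx : x ≠ 0) :
    wtF univ x = Fintype.card K ^ m - Fintype.card K ^ (m - 1) := by
  have := card_filter_add_card_filter_not (s := univ) (fun d => x ⬝ᵥ d = 0)
  rw [card_filter_dotProduct_eq_zero hx, card_univ, Fintype.card_fun, Fintype.card_fin] at this
  exact Nat.eq_sub_of_add_eq' this

lemma wtF_compl_of_card_eq_four (hK : Fintype.card K = 4) (D : Finset (Fin m → K))
    {x : Fin m → K} (hx : x ≠ 0) : (wtF Dᶜ x : ℤ) = 3 * 2 ^ (2 * m - 2) - wtF D x := by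
  have hm : m ≠ 0 := by
    rintro rfl
    exact hx (Subsingleton.elim _ _)
  obtain ⟨k, rfl⟩ := Nat.exists_eq_add_one_of_ne_zero hm
  have h := wtF_add_wtF_compl D x
  rw [wtF_univ hx, hK, Nat.add_sub_cancel, pow_succ, ← Nat.mul_sub_one] at h
  rw [show 2 * (k + 1) - 2 = 2 * k by omega, pow_mul]
  norm_num
  linarith [congrArg (Nat.cast (R := ℤ)) h]

end Complement

section FieldOfCharTwo

variable {K : Type} [Field K] {m : ℕ}

lemma charP_two_of_card_eq_four [Fintype K] (hK : Fintype.card K = 4) : CharP K 2 := by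
  have h4 : (2 : K) * 2 = 0 := by
    have := FiniteField.cast_card_eq_zero K
    rw [hK] at this
    linear_combination this
  exact CharTwo.of_one_ne_zero_of_two_eq_zero one_ne_zero (mul_self_eq_zero.mp h4)

lemma zero_mem_image_dvec [DecidableEq K] (w : K) {Δ : Finset (Fin m → ZMod 2)} (h0 : 0 ∈ Δ) :
    0 ∈ (Δ ×ˢ Δ).image (dvec w) :=
  mem_image.mpr ⟨(0, 0), mem_product.mpr ⟨h0, h0⟩, funext fun _ => by simp [dvec, e2]⟩

variable [CharP K 2]

local notation "ι" => ZMod.castHom (dvd_refl 2) K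

lemma dvec_apply (w : K) (p : (Fin m → ZMod 2) × (Fin m → ZMod 2)) (i : Fin m) :
    dvec w p i = ι (p.1 i) + w * ι (p.2 i) := by
  simp only [dvec, e2, ZMod.castHom_apply, ZMod.cast_eq_val]

lemma castHom_add_mul_castHom_eq_zero_iff {w : K} (hw : w ^ 2 + w + 1 = 0) {s t : ZMod 2} :
    ι s + w * ι t = 0 ↔ s = 0 ∧ t = 0 := by
  have h2 : (2 : K) = 0 := CharTwo.two_eq_zero
  rcases s.two_cases with rfl | rfl <;> rcases t.two_cases with rfl | rfl <;> simp
  · rintro rfl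
    simp at hw
  · intro h
    obtain rfl : w = 1 := by linear_combination -h + h2 * w
    exact one_ne_zero (by linear_combination hw - h2)

lemma dvec_injective {w : K} (hw : w ^ 2 + w + 1 = 0) : Function.Injective (dvec (m := m) w) := by
  intro p q h
  have key (i : Fin m) : p.1 i - q.1 i = 0 ∧ p.2 i - q.2 i = 0 := by
    have hi := congrFun h i
    rw [dvec_apply, dvec_apply] at hi
    rw [← castHom_add_mul_castHom_eq_zero_iff hw, map_sub, map_sub]
    linear_combination hi
  ext i <;> simp only [← sub_eq_zero, key i]

lemma dvec_bijective [Fintype K] (hK : Fintype.card K = 4) {w : K} (hw : w ^ 2 + w + 1 = 0) :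
    Function.Bijective (dvec (m := m) w) := by
  refine (Fintype.bijective_iff_injective_and_card _).mpr ⟨dvec_injective hw, ?_⟩
  simp [hK, ← mul_pow]

lemma card_compl_image_dvec [Fintype K] [DecidableEq K] (hK : Fintype.card K = 4) {w : K}
    (hw : w ^ 2 + w + 1 = 0) (Δ : Finset (Fin m → ZMod 2)) :
    #((Δ ×ˢ Δ).image (dvec w))ᶜ = 4 ^ m - #Δ ^ 2 := by
  rw [card_compl, card_image_of_injective _ (dvec_injective hw), card_product, Fintype.card_fun,
    hK, Fintype.card_fin, sq]

/-- `(a + wb)(c + wd) = (ac + bd) + w(bc + (a + b)d)`, as `w² = w + 1` in characteristic two. -/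
lemma dotF_dvec_dvec {w : K} (hw : w ^ 2 + w + 1 = 0) (p q : (Fin m → ZMod 2) × (Fin m → ZMod 2)) :
    dotF (dvec w p) (dvec w q)
      = ι (p.1 ⬝ᵥ q.1 + p.2 ⬝ᵥ q.2) + w * ι (p.2 ⬝ᵥ q.1 + (p.1 + p.2) ⬝ᵥ q.2) := by
  have h2 : (2 : K) = 0 := CharTwo.two_eq_zero
  simp only [dotF, dotProduct, dvec_apply, map_add, map_sum, map_mul, Pi.add_apply, mul_sum,
    ← sum_add_distrib]
  refine sum_congr rfl fun i _ => ?_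
  linear_combination (ι (p.2 i) * ι (q.2 i)) * (hw - (w + 1) * h2)

lemma dotF_dvec_dvec_eq_zero_iff {w : K} (hw : w ^ 2 + w + 1 = 0)
    (p q : (Fin m → ZMod 2) × (Fin m → ZMod 2)) :
    dotF (dvec w p) (dvec w q) = 0
      ↔ p.1 ⬝ᵥ q.1 + p.2 ⬝ᵥ q.2 = 0 ∧ p.2 ⬝ᵥ q.1 + (p.1 + p.2) ⬝ᵥ q.2 = 0 := by
  rw [dotF_dvec_dvec hw, castHom_add_mul_castHom_eq_zero_iff hw]

variable [DecidableEq K]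

lemma four_mul_wtF_dvec {w : K} (hw : w ^ 2 + w + 1 = 0) (Δ : Finset (Fin m → ZMod 2))
    (u v : Fin m → ZMod 2) :
    (4 * wtF ((Δ ×ˢ Δ).image (dvec w)) (dvec w (u, v)) : ℤ)
      = 3 * #Δ ^ 2 - (charSum Δ u * charSum Δ v + charSum Δ v * charSum Δ (u + v)
          + charSum Δ (u + v) * charSum Δ u) := by
  have hterm (q : (Fin m → ZMod 2) × (Fin m → ZMod 2)) :
      4 * (if ¬(u ⬝ᵥ q.1 + v ⬝ᵥ q.2 = 0 ∧ v ⬝ᵥ q.1 + (u + v) ⬝ᵥ q.2 = 0) then 1 else 0 : ℤ)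
        = 3 - chi (u ⬝ᵥ q.1) * chi (v ⬝ᵥ q.2) - chi (v ⬝ᵥ q.1) * chi ((u + v) ⬝ᵥ q.2)
          - chi ((u + v) ⬝ᵥ q.1) * chi (u ⬝ᵥ q.2) := by
    -- `4·1[(a, b) ≠ 0] = 3 - χ(a) - χ(b) - χ(a + b)` for `a, b ∈ 𝔽₂`
    simp only [add_dotProduct]
    generalize u ⬝ᵥ q.1 = s₁, v ⬝ᵥ q.1 = s₂, u ⬝ᵥ q.2 = t₁, v ⬝ᵥ q.2 = t₂
    revert s₁ s₂ t₁ t₂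
    decide
  have hsplit (f g : (Fin m → ZMod 2) → ℤ) :
      ∑ q ∈ Δ ×ˢ Δ, f q.1 * g q.2 = (∑ d ∈ Δ, f d) * ∑ d ∈ Δ, g d := by
    rw [sum_mul_sum, sum_product]
  rw [wtF, filter_image, card_image_of_injective _ (dvec_injective hw), natCast_card_filter,
    mul_sum]
  simp only [dotF_dvec_dvec_eq_zero_iff hw, ne_eq, hterm, sum_sub_distrib, sum_const,
    card_product, hsplit (chi <| u ⬝ᵥ ·) (chi <| v ⬝ᵥ ·),
    hsplit (chi <| v ⬝ᵥ ·) (chi <| (u + v) ⬝ᵥ ·), hsplit (chi <| (u + v) ⬝ᵥ ·) (chi <| u ⬝ᵥ ·)]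
  simp only [charSum, nsmul_eq_mul]
  push_cast
  ring

lemma four_mul_wtF_le [Fintype K] (hK : Fintype.card K = 4) {w : K} (hw : w ^ 2 + w + 1 = 0)
    (A B : Finset (Fin m)) (x : Fin m → K) :
    (4 * wtF (((delta A ∪ delta B) ×ˢ (delta A ∪ delta B)).image (dvec w)) x : ℤ)
      ≤ (2 ^ #A + 2 ^ #B) * (3 * 2 ^ #A + 3 * 2 ^ #B - 4 * 2 ^ #(A ∩ B)) := by
  obtain ⟨⟨u, v⟩, rfl⟩ := (dvec_bijective hK hw).2 x
  have hmem (p : Fin m → ZMod 2) :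
      charSum (delta A ∪ delta B) p ∈ Set.Icc (-2 ^ #(A ∩ B)) (#(delta A ∪ delta B) : ℤ) :=
    ⟨neg_two_pow_card_inter_le_charSum A B p, charSum_le_card _ p⟩
  have hn : (#(delta A ∪ delta B) + 2 ^ #(A ∩ B) : ℤ) = 2 ^ #A + 2 ^ #B := by
    exact_mod_cast card_delta_union_delta_add A B
  have hbox := sq_sub_two_mul_mul_le_mul_add_mul_add_mul (by positivity)
    (by exact_mod_cast two_pow_card_inter_le_card_delta_union_delta A B) (hmem u) (hmem v)
    (hmem (u + v))
  rw [four_mul_wtF_dvec hw]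
  -- with `2^|A| + 2^|B| = |Δ| + C` the right side is `3|Δ|² + 2C|Δ| - C²`, `C = 2^|A∩B|`
  linear_combination hbox + (3 * #(delta A ∪ delta B) - 2 ^ #(A ∩ B) + 3 * (2 ^ #A + 2 ^ #B)) * hn

lemma exists_ne_zero_four_mul_wtF_eq {w : K} (hw : w ^ 2 + w + 1 = 0) {A B : Finset (Fin m)}
    (hA : ¬ A ⊆ B) (hB : ¬ B ⊆ A) :
    ∃ x : Fin m → K, x ≠ 0 ∧
      (4 * wtF (((delta A ∪ delta B) ×ˢ (delta A ∪ delta B)).image (dvec w)) x : ℤ)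
        = (2 ^ #A + 2 ^ #B) * (3 * 2 ^ #A + 3 * 2 ^ #B - 4 * 2 ^ #(A ∩ B)) := by
  obtain ⟨i, hiA, hiB⟩ := not_subset.mp hA
  obtain ⟨j, hjB, hjA⟩ := not_subset.mp hB
  have hij : i ≠ j := ne_of_mem_of_not_mem hiA hjA
  set u : Fin m → ZMod 2 := Pi.single i 1 + Pi.single j 1
  have hui : u i = 1 := by simp [u, hij]
  have huj : u j = 1 := by simp [u, hij.symm]
  have hu : charSum (delta A ∪ delta B) u = -2 ^ #(A ∩ B) := by
    refine charSum_delta_union_delta_eq_neg (fun h => by simpa [hui] using h i hiA)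
      (fun h => by simpa [huj] using h j hjB) fun k hk => ?_
    have hki : k ≠ i := ne_of_mem_of_not_mem (mem_inter.mp hk).2 hiB
    have hkj : k ≠ j := ne_of_mem_of_not_mem (mem_inter.mp hk).1 hjA
    simp [u, hki, hkj]
  have hn : (#(delta A ∪ delta B) + 2 ^ #(A ∩ B) : ℤ) = 2 ^ #A + 2 ^ #B := by
    exact_mod_cast card_delta_union_delta_add A B
  refine ⟨dvec w (u, 0), fun h => by simpa [dvec_apply, hui] using congrFun h i, ?_⟩
  rw [four_mul_wtF_dvec hw, add_zero, hu, charSum_zero]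
  linear_combination (3 * #(delta A ∪ delta B) - 2 ^ #(A ∩ B) + 3 * (2 ^ #A + 2 ^ #B)) * hn

end FieldOfCharTwo

theorem quaternary_complement_two_maximal_elements_general {m : ℕ}
    (hF : Fintype.card F = 4) (w : F) (hw : w ^ 2 + w + 1 = 0)
    (A B : Finset (Fin m)) (hA : ¬ A ⊆ B) (hB : ¬ B ⊆ A)
    (a b c : ℕ) (ha : a = A.card) (hb : b = B.card) (hc : c = (A ∩ B).card)
    (d : ℚ) (hd : d = 3 * 2 ^ (2 * m - 2)
      - (2 ^ a + 2 ^ b) * (3 * 2 ^ a / 4 + 3 * 2 ^ b / 4 - 2 ^ c)) :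
    ((Finset.univ.erase (0 : Fin m → F))
        \ (((delta A ∪ delta B) ×ˢ (delta A ∪ delta B)).image (dvec w))).card
      = 4 ^ m - (2 ^ a + 2 ^ b - 2 ^ c) ^ 2
    ∧ (Finset.univ.image
        (fun x : Fin m → F => codeword
          ((Finset.univ.erase (0 : Fin m → F))
            \ (((delta A ∪ delta B) ×ˢ (delta A ∪ delta B)).image (dvec w))) x)).card
      = 4 ^ m
    ∧ (∀ x : Fin m → F, x ≠ 0 →
        (wtF ((Finset.univ.erase (0 : Fin m → F))
            \ (((delta A ∪ delta B) ×ˢ (delta A ∪ delta B)).image (dvec w))) x : ℤ)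
          = 3 * 2 ^ (2 * m - 2)
            - wtF (((delta A ∪ delta B) ×ˢ (delta A ∪ delta B)).image (dvec w)) x)
    ∧ (∀ x : Fin m → F,
        wtF ((Finset.univ.erase (0 : Fin m → F))
            \ (((delta A ∪ delta B) ×ˢ (delta A ∪ delta B)).image (dvec w))) x = 0
        ∨ d ≤ (wtF ((Finset.univ.erase (0 : Fin m → F))
            \ (((delta A ∪ delta B) ×ˢ (delta A ∪ delta B)).image (dvec w))) x : ℚ))
    ∧ (∃ x : Fin m → F,
        (wtF ((Finset.univ.erase (0 : Fin m → F))
            \ (((delta A ∪ delta B) ×ˢ (delta A ∪ delta B)).image (dvec w))) x : ℚ) = d) := by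
  have := charP_two_of_card_eq_four hF
  subst ha hb hc
  set D := ((delta A ∪ delta B) ×ˢ (delta A ∪ delta B)).image (dvec w)
  rw [erase_zero_sdiff_eq_compl (zero_mem_image_dvec w (mem_union_left _ (zero_mem_delta A)))]
  have hwt (x : Fin m → F) (hx : x ≠ 0) := wtF_compl_of_card_eq_four hF D hx
  have hd_le (x : Fin m → F) (hx : x ≠ 0) : d ≤ wtF Dᶜ x := by
    have hwtx := hwt x hx
    have hmax := four_mul_wtF_le hF hw A B x
    qify at hwtx hmax
    linarith
  have hd_pos : 0 < d :=
    hd ▸ three_mul_two_pow_sub_pos _ (card_lt_of_not_subset hB) (card_lt_of_not_subset hA)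
  refine ⟨?_, ?_, hwt, fun x => ?_, ?_⟩
  · rw [card_compl_image_dvec hF hw, Nat.eq_sub_of_add_eq (card_delta_union_delta_add A B)]
  · rw [card_image_of_injective _ (codeword_injective fun x hx h => ?_), card_univ,
      Fintype.card_fun, hF, Fintype.card_fin]
    linarith [hd_le x hx, show (wtF Dᶜ x : ℚ) = 0 by exact_mod_cast h]
  · rcases eq_or_ne x 0 with rfl | hx
    exacts [Or.inl (wtF_zero _), Or.inr (hd_le x hx)]
  · obtain ⟨x, hx, hmax⟩ := exists_ne_zero_four_mul_wtF_eq hw hA hB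
    have hwtx := hwt x hx
    qify at hwtx hmax
    exact ⟨x, by linarith⟩

/-- Theorem 4.10 (length, size, weight relation and minimum distance): for `Δ = Δ_A ∪ Δ_B`
with `A ⊄ B`, `B ⊄ A`, `D = Δ + wΔ`, `N = 2^{|A|}+2^{|B|}−2^{|A∩B|}` and
`D^c = (F_4^m \ {0}) \ D`, the code `C_{D^c}` has length `4^m − N²`, `4^m` codewords,
`wt(c_{D^c}(x)) = 3·2^{2m−2} − wt(c_D(x))` for `x ≠ 0`, and minimum distance
`3·2^{2m−2} − (2^{|A|}+2^{|B|})(3·2^{|A|−2}+3·2^{|B|−2}−2^{|A∩B|})`. -/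
theorem quaternary_complement_two_maximal_elements {m : ℕ} (hm : 1 ≤ m)
    (hF : Fintype.card F = 4) (w : F) (hw : w ^ 2 + w + 1 = 0)
    (A B : Finset (Fin m)) (hA : ¬ A ⊆ B) (hB : ¬ B ⊆ A)
    (a b c : ℕ) (ha : a = A.card) (hb : b = B.card) (hc : c = (A ∩ B).card)
    (d : ℚ) (hd : d = 3 * 2 ^ (2 * m - 2)
      - (2 ^ a + 2 ^ b) * (3 * 2 ^ a / 4 + 3 * 2 ^ b / 4 - 2 ^ c)) :
    ((Finset.univ.erase (0 : Fin m → F))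
        \ (((delta A ∪ delta B) ×ˢ (delta A ∪ delta B)).image (dvec w))).card
      = 4 ^ m - (2 ^ a + 2 ^ b - 2 ^ c) ^ 2
    ∧ (Finset.univ.image
        (fun x : Fin m → F => codeword
          ((Finset.univ.erase (0 : Fin m → F))
            \ (((delta A ∪ delta B) ×ˢ (delta A ∪ delta B)).image (dvec w))) x)).card
      = 4 ^ m
    ∧ (∀ x : Fin m → F, x ≠ 0 →
        (wtF ((Finset.univ.erase (0 : Fin m → F))
            \ (((delta A ∪ delta B) ×ˢ (delta A ∪ delta B)).image (dvec w))) x : ℤ)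
          = 3 * 2 ^ (2 * m - 2)
            - wtF (((delta A ∪ delta B) ×ˢ (delta A ∪ delta B)).image (dvec w)) x)
    ∧ (∀ x : Fin m → F,
        wtF ((Finset.univ.erase (0 : Fin m → F))
            \ (((delta A ∪ delta B) ×ˢ (delta A ∪ delta B)).image (dvec w))) x = 0
        ∨ d ≤ (wtF ((Finset.univ.erase (0 : Fin m → F))
            \ (((delta A ∪ delta B) ×ˢ (delta A ∪ delta B)).image (dvec w))) x : ℚ))
    ∧ (∃ x : Fin m → F,
        (wtF ((Finset.univ.erase (0 : Fin m → F))
            \ (((delta A ∪ delta B) ×ˢ (delta A ∪ delta B)).image (dvec w))) x : ℚ) = d) :=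
  quaternary_complement_two_maximal_elements_general hF w hw A B hA hB a b c ha hb hc d hd
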